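/- Let X be a strongly connected pure d-dimensional simplicial complex. Then there exists a subcomplex X' ⊆ X that is a d-forest with the same vertex set as X and satisfying f_0(X') = f_d(X') + d. -/

import Mathlib

open Finset

/-- A (finite abstract) simplicial complex, represented by its finite set of faces,
which is closed under taking subsets. -/
def IsComplex {V : Type*} [DecidableEq V] (X : Finset (Finset V)) : Prop :=
  ∀ σ ∈ X, ∀ τ ⊆ σ, τ ∈ X

/-- `X` is pure `d`-dimensional: every face is contained in a `d`-simplex
(a face with `d+1` vertices). -/
def IsPure {V : Type*} [DecidableEq V] (d : ℕ) (X : Finset (Finset V)) : Prop :=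
  ∀ σ ∈ X, ∃ τ ∈ X, σ ⊆ τ ∧ τ.card = d + 1

/-- `fk k X` is the number of `k`-simplices (faces with `k+1` vertices) of `X`. -/
def fk {V : Type*} [DecidableEq V] (k : ℕ) (X : Finset (Finset V)) : ℕ :=
  (X.filter fun σ => σ.card = k + 1).card

/-- Two `(d-1)`-simplices are adjacent in `X` if their union is a `d`-simplex of `X`. -/
def DAdj {V : Type*} [DecidableEq V] (d : ℕ) (X : Finset (Finset V))
    (σ σ' : Finset V) : Prop :=
  σ ∈ X ∧ σ' ∈ X ∧ σ.card = d ∧ σ'.card = d ∧ σ ∪ σ' ∈ X ∧ (σ ∪ σ').card = d + 1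

/-- A pure `d`-dimensional complex is strongly connected if any two `(d-1)`-simplices
are joined by a chain of `(d-1)`-simplices with consecutive unions `d`-simplices of `X`. -/
def StronglyConnected {V : Type*} [DecidableEq V] (d : ℕ) (X : Finset (Finset V)) : Prop :=
  ∀ σ ∈ X, σ.card = d → ∀ σ' ∈ X, σ'.card = d →
    Relation.ReflTransGen (DAdj d X) σ σ'

/-- A `d`-tree: built from a single `(d-1)`-simplex (the trivial `d`-tree) by repeatedly
attaching a `d`-simplex along an existing `(d-1)`-simplex together with one new vertex. -/
inductive IsDTree {V : Type*} [DecidableEq V] (d : ℕ) : Finset (Finset V) → Prop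
  | trivial (σ : Finset V) (h : σ.card = d) : IsDTree d σ.powerset
  | step (X : Finset (Finset V)) (σ : Finset V) (v : V) (hX : IsDTree d X)
      (hσ : σ ∈ X) (hcard : σ.card = d) (hv : ∀ ρ ∈ X, v ∉ ρ) :
      IsDTree d (X ∪ (insert v σ).powerset)


/-- A `d`-forest: a finite union of `d`-trees any two of which intersect in dimension
`< d - 1` (i.e. every common face has fewer than `d` vertices). -/
def IsDForest {V : Type*} [DecidableEq V] (d : ℕ) (X : Finset (Finset V)) : Prop :=
  ∃ (c : ℕ) (T : Fin c → Finset (Finset V)),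
    (∀ i, IsDTree d (T i)) ∧ X = Finset.univ.biUnion T ∧
    ∀ i j, i ≠ j → ∀ σ ∈ T i ∩ T j, σ.card < d
section Aux
variable {V : Type*} [DecidableEq V]

lemma mem_foldrUnion {l : List (Finset (Finset V))} {ρ : Finset V} :
    ρ ∈ l.foldr (· ∪ ·) ∅ ↔ ∃ T ∈ l, ρ ∈ T := by
  induction l with
  | nil => simp
  | cons T l ih => simp [ih]

lemma IsDTree.downward {d : ℕ} {T : Finset (Finset V)} (h : IsDTree d T) :
    ∀ ρ ∈ T, ∀ ρ' ⊆ ρ, ρ' ∈ T := by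
  induction h with
  | trivial σ h =>
      intro ρ hρ ρ' hρ'
      simp only [mem_powerset] at *
      exact hρ'.trans hρ
  | step Y σ v hY hσ hcard hv ih =>
      intro ρ hρ ρ' hρ'
      rcases mem_union.1 hρ with h1 | h1
      · exact mem_union_left _ (ih ρ h1 ρ' hρ')
      · refine mem_union_right _ ?_
        simp only [mem_powerset] at *
        exact hρ'.trans h1

lemma singleTree {d : ℕ} {σ : Finset V} {v : V} (hσ : σ.card = d) (hv : v ∉ σ) :
    IsDTree d (insert v σ : Finset V).powerset := by
  have h := IsDTree.step (V := V) σ.powerset σ v (IsDTree.trivial σ hσ)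
    (mem_powerset.2 (Finset.Subset.refl σ)) hσ
    (fun ρ hρ hvρ => hv (mem_powerset.1 hρ hvρ))
  have he : σ.powerset ∪ (insert v σ).powerset = (insert v σ).powerset :=
    union_eq_right.2 (powerset_mono.2 (subset_insert _ _))
  rwa [he] at h

/-- dual adjacency on `d`-simplices -/
def Adj (d : ℕ) (S : Finset (Finset V)) (τ τ' : Finset V) : Prop :=
  τ ∈ S ∧ τ' ∈ S ∧ ∃ σ : Finset V, σ.card = d ∧ σ ⊆ τ ∧ σ ⊆ τ'

lemma cross {r : Finset V → Finset V → Prop} {D : Finset (Finset V)} {a b : Finset V}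
    (h : Relation.ReflTransGen r a b) (ha : a ∈ D) (hb : b ∉ D) :
    ∃ x ∈ D, ∃ y, y ∉ D ∧ r x y := by
  induction h using Relation.ReflTransGen.head_induction_on with
  | refl => exact absurd ha hb
  | head h' h ih =>
      rename_i x c
      by_cases hc : c ∈ D
      · exact ih hc
      · exact ⟨x, ha, c, hc, h'⟩

end Aux
section Conn
variable {V : Type*} [DecidableEq V]

lemma chain_lift {d : ℕ} {X S : Finset (Finset V)}
    (hS : ∀ τ, τ ∈ S ↔ τ ∈ X ∧ τ.card = d + 1)
    {ε ε' : Finset V} (h : Relation.ReflTransGen (DAdj d X) ε ε')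
    {τ' : Finset V} (hτ' : τ' ∈ S) (hε' : ε' ⊆ τ') (hε'c : ε'.card = d) :
    ∀ τ ∈ S, ε ⊆ τ → ε.card = d → Relation.ReflTransGen (Adj d S) τ τ' := by
  induction h using Relation.ReflTransGen.head_induction_on with
  | refl =>
      intro τ hτ hsub hc
      exact Relation.ReflTransGen.single ⟨hτ, hτ', ε', hε'c, hsub, hε'⟩
  | head h' h ih =>
      rename_i ε₁ ε₂
      intro τ hτ hsub hc
      obtain ⟨h1, h2, h3, h4, h5, h6⟩ := h'
      have hμ : ε₁ ∪ ε₂ ∈ S := (hS _).2 ⟨h5, h6⟩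
      have step1 : Adj d S τ (ε₁ ∪ ε₂) := ⟨hτ, hμ, ε₁, h3, hsub, subset_union_left⟩
      exact Relation.ReflTransGen.head step1 (ih _ hμ subset_union_right h4)

lemma dual_conn {d : ℕ} {X S : Finset (Finset V)} (_hd : 1 ≤ d)
    (hXc : IsComplex X) (hXsc : StronglyConnected d X)
    (hS : ∀ τ, τ ∈ S ↔ τ ∈ X ∧ τ.card = d + 1)
    {τ τ' : Finset V} (hτ : τ ∈ S) (hτ' : τ' ∈ S) :
    Relation.ReflTransGen (Adj d S) τ τ' := by
  obtain ⟨hτX, hτc⟩ := (hS τ).1 hτ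
  obtain ⟨hτ'X, hτ'c⟩ := (hS τ').1 hτ'
  obtain ⟨σ, hσsub, hσc⟩ := Finset.exists_subset_card_eq (s := τ) (n := d) (by omega)
  obtain ⟨σ', hσ'sub, hσ'c⟩ := Finset.exists_subset_card_eq (s := τ') (n := d) (by omega)
  have hσX : σ ∈ X := hXc τ hτX σ hσsub
  have hσ'X : σ' ∈ X := hXc τ' hτ'X σ' hσ'sub
  exact chain_lift hS (hXsc σ hσX hσc σ' hσ'X hσ'c) hτ' hσ'sub hσ'c τ hτ hσsub hσc

end Conn
section Inv
variable {V : Type*} [DecidableEq V]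

structure TInv (d : ℕ) (S D K : Finset (Finset V)) (Ts : List (Finset (Finset V))) : Prop where
  hKD : K ⊆ D
  hDS : D ⊆ S
  hcover : ∀ τ ∈ D, τ ⊆ K.biUnion id
  htrees : ∀ T ∈ Ts, IsDTree d T
  hpair : Ts.Pairwise (fun T T' => ∀ σ, σ ∈ T → σ ∈ T' → σ.card < d)
  hunion : Ts.foldr (· ∪ ·) ∅ = K.biUnion Finset.powerset
  hcount : (K.biUnion id).card = K.card + d

lemma inv_init {d : ℕ} {S : Finset (Finset V)} (hS : ∀ τ ∈ S, τ.card = d + 1)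
    {τ₀ : Finset V} (hτ₀ : τ₀ ∈ S) : TInv d S {τ₀} {τ₀} [τ₀.powerset] := by
  have hc : τ₀.card = d + 1 := hS τ₀ hτ₀
  have hne : τ₀.Nonempty := card_pos.1 (by omega)
  obtain ⟨w, hw⟩ := hne
  have htree : IsDTree d τ₀.powerset := by
    have h := singleTree (d := d) (σ := τ₀.erase w) (v := w)
      (by rw [card_erase_of_mem hw]; omega) (notMem_erase _ _)
    rwa [insert_erase hw] at h
  refine ⟨Finset.Subset.refl _, singleton_subset_iff.2 hτ₀, ?_, ?_, ?_, ?_, ?_⟩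
  · intro τ hτ
    rw [mem_singleton] at hτ
    subst hτ
    intro x hx
    exact mem_biUnion.2 ⟨τ, mem_singleton_self _, hx⟩
  · intro T hT
    rw [List.mem_singleton] at hT
    subst hT; exact htree
  · simp
  · simp
  · simp [hc]; omega
end Inv
section Grow
variable {V : Type*} [DecidableEq V]

lemma inv_grow {d : ℕ} (hd : 1 ≤ d) {S D K : Finset (Finset V)} {Ts : List (Finset (Finset V))}
    (hS : ∀ τ, τ ∈ S → τ.card = d + 1)
    (hconn : ∀ τ ∈ S, ∀ τ' ∈ S, Relation.ReflTransGen (Adj d S) τ τ')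
    (inv : TInv d S D K Ts) (hne : D ≠ S) :
    ∃ τb, τb ∉ D ∧ τb ∈ S ∧ ∃ K' Ts', TInv d S (insert τb D) K' Ts' := by
  classical
  -- K is nonempty
  have hKne : K.Nonempty := by
    rcases K.eq_empty_or_nonempty with h | h
    · exfalso; have := inv.hcount; rw [h] at this; simp at this; omega
    · exact h
  obtain ⟨τ₀, hτ₀K⟩ := hKne
  have hτ₀D : τ₀ ∈ D := inv.hKD hτ₀K
  have hτ₀S : τ₀ ∈ S := inv.hDS hτ₀D
  -- find a simplex outside D
  have hss : D ⊂ S := lt_of_le_of_ne inv.hDS hne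
  obtain ⟨τ₁, hτ₁S, hτ₁D⟩ := Finset.exists_of_ssubset hss
  -- cross the boundary
  obtain ⟨τa, hτaD, τb, hτbD, hadj⟩ := cross (hconn τ₀ hτ₀S τ₁ hτ₁S) hτ₀D hτ₁D
  obtain ⟨haS, hbS, σ, hσc, hσa, hσb⟩ := hadj
  have hbc : τb.card = d + 1 := hS τb hbS
  -- τb = insert v σ for exactly one new vertex candidate v
  have hsd : (τb \ σ).Nonempty := by
    rw [← Finset.card_pos, card_sdiff_of_subset hσb]; omega
  obtain ⟨v, hv⟩ := hsd
  have hvτb : v ∈ τb := (mem_sdiff.1 hv).1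
  have hvσ : v ∉ σ := (mem_sdiff.1 hv).2
  have hτb : τb = insert v σ := by
    refine (Finset.eq_of_subset_of_card_le (insert_subset hvτb hσb) ?_).symm
    rw [card_insert_of_notMem hvσ, hσc, hbc]
  set VK := K.biUnion id with hVK
  have hσVK : σ ⊆ VK := fun x hx => inv.hcover τa hτaD (hσa hx)
  refine ⟨τb, hτbD, hbS, ?_⟩
  by_cases hvV : v ∈ VK
  · -- discard τb : no new vertex
    have hτbVK : τb ⊆ VK := by
      rw [hτb]; exact insert_subset hvV hσVK
    refine ⟨K, Ts, inv.hKD.trans (subset_insert _ _), insert_subset hbS inv.hDS, ?_,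
      inv.htrees, inv.hpair, inv.hunion, inv.hcount⟩
    intro τ hτ
    rcases mem_insert.1 hτ with h | h
    · subst h; exact hτbVK
    · exact inv.hcover τ h
  · -- keep τb : v is a new vertex
    have fresh : ∀ T ∈ Ts, ∀ ρ ∈ T, v ∉ ρ := by
      intro T hT ρ hρ hvρ
      have h1 : ρ ∈ Ts.foldr (· ∪ ·) ∅ := mem_foldrUnion.2 ⟨T, hT, hρ⟩
      rw [inv.hunion] at h1
      obtain ⟨τ, hτK, hρτ⟩ := mem_biUnion.1 h1
      exact hvV (mem_biUnion.2 ⟨τ, hτK, (mem_powerset.1 hρτ) hvρ⟩)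
    have hτbK : τb ∉ K := fun h => hτbD (inv.hKD h)
    have hVK' : (insert τb K).biUnion id = insert v VK := by
      rw [biUnion_insert]
      simp only [id]
      rw [hτb, insert_union, union_eq_right.2 hσVK]
    have hcount' : ((insert τb K).biUnion id).card = (insert τb K).card + d := by
      rw [hVK', card_insert_of_notMem hvV, card_insert_of_notMem hτbK, inv.hcount]
      omega
    have hcover' : ∀ τ ∈ insert τb D, τ ⊆ (insert τb K).biUnion id := by
      intro τ hτ
      rcases mem_insert.1 hτ with h | h
      · subst h; rw [hVK', hτb]
        exact insert_subset_insert _ hσVK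
      · rw [hVK']
        exact (inv.hcover τ h).trans (subset_insert _ _)
    have hKD' : insert τb K ⊆ insert τb D := insert_subset_insert _ inv.hKD
    have hDS' : insert τb D ⊆ S := insert_subset hbS inv.hDS
    set P := (insert v σ : Finset V).powerset with hP
    by_cases hσT : ∃ T ∈ Ts, σ ∈ T
    · -- attach to the tree containing σ
      obtain ⟨T, hT, hσT⟩ := hσT
      set f : Finset (Finset V) → Finset (Finset V) := fun T' => if T' = T then T' ∪ P else T'
        with hf
      refine ⟨insert τb K, Ts.map f, hKD', hDS', hcover', ?_, ?_, ?_, hcount'⟩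
      · -- trees
        intro T' hT'
        obtain ⟨T₁, hT₁, rfl⟩ := List.mem_map.1 hT'
        by_cases h1 : T₁ = T
        · subst h1
          simp only [hf, if_pos rfl, hP]
          exact IsDTree.step T₁ σ v (inv.htrees T₁ hT₁) hσT hσc (fresh T₁ hT₁)
        · simp only [hf, if_neg h1]
          exact inv.htrees T₁ hT₁
      · -- pairwise
        rw [List.pairwise_map]
        have hp := List.Pairwise.and_mem.1 inv.hpair
        refine hp.imp ?_
        rintro T₁ T₂ ⟨hT₁, hT₂, hR⟩ ρ hρ1 hρ2
        have key : ∀ T₁ ∈ Ts, ∀ ρ', ρ' ∈ f T₁ → ρ' ∈ T₁ ∨ (T₁ = T ∧ ρ' ∈ P) := by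
          intro T₁ hT₁ ρ' hρ'
          by_cases h1 : T₁ = T
          · subst h1; rw [hf] at hρ'; simp only [if_pos rfl] at hρ'
            rcases mem_union.1 hρ' with h | h
            · exact Or.inl h
            · exact Or.inr ⟨rfl, h⟩
          · rw [hf] at hρ'; simp only [if_neg h1] at hρ'; exact Or.inl hρ'
        have memP : ∀ T₁ ∈ Ts, T₁ = T → ∀ ρ', ρ' ∈ P → ρ' ∈ T₁ ∨ v ∈ ρ' := by
          rintro T₁ hT₁ rfl ρ' hρ'
          by_cases hvρ : v ∈ ρ'
          · exact Or.inr hvρ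
          · left
            have : ρ' ⊆ σ := by
              intro x hx
              rcases mem_insert.1 (mem_powerset.1 hρ' hx) with h | h
              · exact absurd (h ▸ hx) hvρ
              · exact h
            exact (inv.htrees T₁ hT₁).downward σ hσT ρ' this
        have step1 : ρ ∈ T₁ ∨ v ∈ ρ := by
          rcases key T₁ hT₁ ρ hρ1 with h | ⟨rfl, h⟩
          · exact Or.inl h
          · rcases memP T₁ hT₁ rfl ρ h with h' | h'
            · exact Or.inl h'
            · exact Or.inr h'
        have step2 : ρ ∈ T₂ ∨ v ∈ ρ := by
          rcases key T₂ hT₂ ρ hρ2 with h | ⟨rfl, h⟩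
          · exact Or.inl h
          · rcases memP T₂ hT₂ rfl ρ h with h' | h'
            · exact Or.inl h'
            · exact Or.inr h'
        rcases step1 with h1 | h1
        · rcases step2 with h2 | h2
          · exact hR ρ h1 h2
          · exact absurd h2 (fresh T₁ hT₁ ρ h1)
        · rcases step2 with h2 | h2
          · exact absurd h1 (fresh T₂ hT₂ ρ h2)
          · -- v ∈ ρ on both sides: then T₁ = T = T₂, use σ ∈ T to contradict hR
            rcases key T₁ hT₁ ρ hρ1 with h | ⟨e1, _⟩
            · exact absurd h1 (fresh T₁ hT₁ ρ h)
            · rcases key T₂ hT₂ ρ hρ2 with h | ⟨e2, _⟩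
              · exact absurd h1 (fresh T₂ hT₂ ρ h)
              · exfalso
                have := hR σ (e1 ▸ hσT) (e2 ▸ hσT)
                omega
      · -- union
        ext ρ
        rw [mem_foldrUnion]
        simp only [List.mem_map]
        constructor
        · rintro ⟨T', ⟨T₁, hT₁, rfl⟩, hρ⟩
          rw [mem_biUnion]
          by_cases h1 : T₁ = T
          · subst h1
            rw [hf] at hρ; simp only [if_pos rfl] at hρ
            rcases mem_union.1 hρ with h | h
            · have : ρ ∈ Ts.foldr (· ∪ ·) ∅ := mem_foldrUnion.2 ⟨T₁, hT₁, h⟩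
              rw [inv.hunion] at this
              obtain ⟨τ, hτ, hρτ⟩ := mem_biUnion.1 this
              exact ⟨τ, mem_insert_of_mem hτ, hρτ⟩
            · exact ⟨τb, mem_insert_self _ _, by rwa [hτb, ← hP, mem_powerset, ← mem_powerset]⟩
          · rw [hf] at hρ; simp only [if_neg h1] at hρ
            have : ρ ∈ Ts.foldr (· ∪ ·) ∅ := mem_foldrUnion.2 ⟨T₁, hT₁, hρ⟩
            rw [inv.hunion] at this
            obtain ⟨τ, hτ, hρτ⟩ := mem_biUnion.1 this
            exact ⟨τ, mem_insert_of_mem hτ, hρτ⟩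
        · intro hρ
          obtain ⟨τ, hτ, hρτ⟩ := mem_biUnion.1 hρ
          rcases mem_insert.1 hτ with h | h
          · subst h
            refine ⟨f T, ⟨T, hT, rfl⟩, ?_⟩
            rw [hf]; simp only [if_pos rfl]
            refine mem_union_right _ ?_
            rwa [hP, ← hτb]
          · have : ρ ∈ Ts.foldr (· ∪ ·) ∅ := by
              rw [inv.hunion]; exact mem_biUnion.2 ⟨τ, h, hρτ⟩
            obtain ⟨T₁, hT₁, hρ1⟩ := mem_foldrUnion.1 this
            refine ⟨f T₁, ⟨T₁, hT₁, rfl⟩, ?_⟩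
            by_cases h1 : T₁ = T
            · subst h1; rw [hf]; simp only [if_pos rfl]; exact mem_union_left _ hρ1
            · rw [hf]; simp only [if_neg h1]; exact hρ1
    · -- start a new tree
      push_neg at hσT
      refine ⟨insert τb K, P :: Ts, hKD', hDS', hcover', ?_, ?_, ?_, hcount'⟩
      · intro T' hT'
        rcases List.mem_cons.1 hT' with h | h
        · subst h; exact singleTree hσc hvσ
        · exact inv.htrees T' h
      · refine List.pairwise_cons.2 ⟨?_, inv.hpair⟩
        intro T₂ hT₂ ρ hρ1 hρ2
        by_cases hvρ : v ∈ ρ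
        · exact absurd hvρ (fresh T₂ hT₂ ρ hρ2)
        · have hρσ : ρ ⊆ σ := by
            intro x hx
            rcases mem_insert.1 (mem_powerset.1 hρ1 hx) with h | h
            · exact absurd (h ▸ hx) hvρ
            · exact h
          have hle : ρ.card ≤ d := hσc ▸ card_le_card hρσ
          rcases lt_or_eq_of_le hle with h | h
          · exact h
          · exfalso
            have : ρ = σ := Finset.eq_of_subset_of_card_le hρσ (by omega)
            exact hσT T₂ hT₂ (this ▸ hρ2)
      · ext ρ
        rw [mem_foldrUnion]
        simp only [List.mem_cons]
        constructor
        · rintro ⟨T', hT', hρ⟩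
          rcases hT' with h | h
          · subst h
            exact mem_biUnion.2 ⟨τb, mem_insert_self _ _, by rwa [hτb, mem_powerset, ← mem_powerset]⟩
          · have : ρ ∈ Ts.foldr (· ∪ ·) ∅ := mem_foldrUnion.2 ⟨T', h, hρ⟩
            rw [inv.hunion] at this
            obtain ⟨τ, hτ, hρτ⟩ := mem_biUnion.1 this
            exact mem_biUnion.2 ⟨τ, mem_insert_of_mem hτ, hρτ⟩
        · intro hρ
          obtain ⟨τ, hτ, hρτ⟩ := mem_biUnion.1 hρ
          rcases mem_insert.1 hτ with h | h
          · subst h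
            exact ⟨P, Or.inl rfl, by rwa [hP, ← hτb]⟩
          · have : ρ ∈ Ts.foldr (· ∪ ·) ∅ := by
              rw [inv.hunion]; exact mem_biUnion.2 ⟨τ, h, hρτ⟩
            obtain ⟨T₁, hT₁, hρ1⟩ := mem_foldrUnion.1 this
            exact ⟨T₁, Or.inr hT₁, hρ1⟩
end Grow
section Finish
variable {V : Type*} [DecidableEq V]

lemma inv_reach {d : ℕ} (hd : 1 ≤ d) {S : Finset (Finset V)}
    (hS : ∀ τ, τ ∈ S → τ.card = d + 1)
    (hconn : ∀ τ ∈ S, ∀ τ' ∈ S, Relation.ReflTransGen (Adj d S) τ τ') :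
    ∀ n (D K : Finset (Finset V)) (Ts : List (Finset (Finset V))),
      TInv d S D K Ts → (S \ D).card ≤ n → ∃ K' Ts', TInv d S S K' Ts' := by
  intro n
  induction n with
  | zero =>
      intro D K Ts inv hle
      have : S \ D = ∅ := card_eq_zero.1 (Nat.le_zero.1 hle)
      have hDS : D = S := Finset.Subset.antisymm inv.hDS (fun τ hτ => by
        by_contra h
        exact absurd (mem_sdiff.2 ⟨hτ, h⟩) (by rw [this]; exact notMem_empty _))
      exact ⟨K, Ts, hDS ▸ inv⟩
  | succ n ih =>
      intro D K Ts inv hle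
      by_cases hne : D = S
      · exact ⟨K, Ts, hne ▸ inv⟩
      · obtain ⟨τb, hτbD, hτbS, K', Ts', inv'⟩ := inv_grow hd hS hconn inv hne
        refine ih (insert τb D) K' Ts' inv' ?_
        have h1 : S \ insert τb D = (S \ D).erase τb := by
          ext x; simp [mem_sdiff, mem_erase, and_comm, not_or]; tauto
        have h2 : τb ∈ S \ D := mem_sdiff.2 ⟨hτbS, hτbD⟩
        rw [h1, card_erase_of_mem h2]
        omega
end Finish

/-- Every strongly connected pure `d`-dimensional simplicial complex `X` contains a
`d`-forest `X'` with the same vertex set and with `f₀(X') = f_d(X') + d`. -/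
theorem stmt19 {V : Type*} [DecidableEq V] (d : ℕ) (hd : 1 ≤ d)
    (X : Finset (Finset V)) (hXc : IsComplex X) (hXne : X.Nonempty)
    (hXpure : IsPure d X) (hXsc : StronglyConnected d X) :
    ∃ X' ⊆ X, IsDForest d X' ∧
      (X'.filter fun σ => σ.card = 1) = (X.filter fun σ => σ.card = 1) ∧
      fk 0 X' = fk d X' + d := by
  classical
  set S : Finset (Finset V) := X.filter (fun τ => τ.card = d + 1) with hSdef
  have hSiff : ∀ τ, τ ∈ S ↔ τ ∈ X ∧ τ.card = d + 1 := by
    intro τ; simp [hSdef, mem_filter]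
  have hS : ∀ τ, τ ∈ S → τ.card = d + 1 := fun τ hτ => ((hSiff τ).1 hτ).2
  have hconn : ∀ τ ∈ S, ∀ τ' ∈ S, Relation.ReflTransGen (Adj d S) τ τ' :=
    fun τ hτ τ' hτ' => dual_conn hd hXc hXsc hSiff hτ hτ'
  -- initial simplex
  obtain ⟨ρ₀, hρ₀⟩ := hXne
  obtain ⟨τ₀, hτ₀X, _, hτ₀c⟩ := hXpure ρ₀ hρ₀
  have hτ₀S : τ₀ ∈ S := (hSiff τ₀).2 ⟨hτ₀X, hτ₀c⟩
  obtain ⟨K, Ts, inv⟩ := inv_reach hd hS hconn (S \ {τ₀}).card {τ₀} {τ₀} [τ₀.powerset]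
    (inv_init hS hτ₀S) le_rfl
  set X' : Finset (Finset V) := K.biUnion Finset.powerset with hX'def
  have hKS : K ⊆ S := inv.hKD.trans inv.hDS
  have hX'X : X' ⊆ X := by
    intro ρ hρ
    obtain ⟨τ, hτ, hρτ⟩ := mem_biUnion.1 hρ
    exact hXc τ ((hSiff τ).1 (hKS hτ)).1 ρ (mem_powerset.1 hρτ)
  set VK := K.biUnion id with hVKdef
  have hvX' : ∀ v, v ∈ VK ↔ ({v} : Finset V) ∈ X' := by
    intro v
    constructor
    · intro hv
      obtain ⟨τ, hτ, hvτ⟩ := mem_biUnion.1 hv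
      exact mem_biUnion.2 ⟨τ, hτ, mem_powerset.2 (singleton_subset_iff.2 hvτ)⟩
    · intro hv
      obtain ⟨τ, hτ, hvτ⟩ := mem_biUnion.1 hv
      exact mem_biUnion.2 ⟨τ, hτ, singleton_subset_iff.1 (mem_powerset.1 hvτ)⟩
  refine ⟨X', hX'X, ?_, ?_, ?_⟩
  · -- forest
    refine ⟨Ts.length, fun i => Ts.get i, fun i => inv.htrees _ (Ts.get_mem i), ?_, ?_⟩
    · ext ρ
      constructor
      · intro h
        have h2 : ρ ∈ Ts.foldr (· ∪ ·) ∅ := by rw [inv.hunion]; exact h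
        obtain ⟨T, hT, hρ⟩ := mem_foldrUnion.1 h2
        obtain ⟨i, hi⟩ := List.get_of_mem hT
        refine mem_biUnion.mpr (⟨i, mem_univ _, ?_⟩ :
          ∃ i ∈ (univ : Finset (Fin Ts.length)), ρ ∈ Ts.get i)
        rw [hi]; exact hρ
      · intro h
        obtain ⟨i, -, hρ⟩ := mem_biUnion.1 h
        rw [hX'def, ← inv.hunion]
        exact mem_foldrUnion.2 ⟨Ts.get i, Ts.get_mem i, hρ⟩
    · intro i j hij σ hσ
      rw [mem_inter] at hσ
      have hp := List.pairwise_iff_get.1 inv.hpair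
      rcases lt_or_gt_of_ne hij with h | h
      · exact hp i j h σ hσ.1 hσ.2
      · exact hp j i h σ hσ.2 hσ.1
  · -- same vertex set
    ext σ
    simp only [mem_filter]
    constructor
    · rintro ⟨h1, h2⟩; exact ⟨hX'X h1, h2⟩
    · rintro ⟨h1, h2⟩
      obtain ⟨v, rfl⟩ := card_eq_one.1 h2
      obtain ⟨τ, hτX, hστ, hτc⟩ := hXpure _ h1
      have hτS : τ ∈ S := (hSiff τ).2 ⟨hτX, hτc⟩
      have hvVK : v ∈ VK := inv.hcover τ hτS (hστ (mem_singleton_self v))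
      exact ⟨(hvX' v).1 hvVK, h2⟩
  · -- counts
    have h0 : X'.filter (fun σ => σ.card = 1) = VK.image (fun v => ({v} : Finset V)) := by
      ext ρ
      simp only [mem_filter, mem_image]
      constructor
      · rintro ⟨h1, h2⟩
        obtain ⟨v, rfl⟩ := card_eq_one.1 h2
        exact ⟨v, (hvX' v).2 h1, rfl⟩
      · rintro ⟨v, hv, rfl⟩
        exact ⟨(hvX' v).1 hv, card_singleton v⟩
    have hd' : X'.filter (fun σ => σ.card = d + 1) = K := by
      ext ρ
      simp only [mem_filter]
      constructor
      · rintro ⟨h1, h2⟩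
        obtain ⟨τ, hτ, hρτ⟩ := mem_biUnion.1 h1
        have : ρ = τ := Finset.eq_of_subset_of_card_le (mem_powerset.1 hρτ)
          (by rw [hS τ (hKS hτ), h2])
        exact this ▸ hτ
      · intro hρ
        exact ⟨mem_biUnion.2 ⟨ρ, hρ, mem_powerset_self _⟩, hS ρ (hKS hρ)⟩
    rw [fk, fk, h0, hd', card_image_of_injective _ (fun a b => by simp)]
    exact inv.hcount
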